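/- arXiv:1710.01266 — 2 statements merged into one kernel-verified Lean document; each statement's English description precedes it below -/
import Mathlib

section
/- Let m ≥ 1, let Γ be a symmetric positive definite real m×m matrix with smallest eigenvalue κ₁², and let A be a symmetric real m×m matrix. Then for every ε ∈ ℝ and every s ∈ ℝ with s ≠ 0, the complex m×m matrix D(ε, s) = −ε s² I + i s Γ + ε A is invertible and ‖D(ε, s)⁻¹‖ ≤ 1/(κ₁² |s|). -/
noncomputable section

/-- Operator norm of a complex `m × m` matrix induced by the Euclidean norm on `ℂ^m`. -/
def l2OpNorm (m : ℕ) (D : Matrix (Fin m) (Fin m) ℂ) : ℝ :=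
  ‖LinearMap.toContinuousLinearMap (Matrix.toEuclideanLin D)‖

/-- The propagator matrix `D(ε,s) = -ε s² 1 + i s Γ + ε A`. -/
def propagator (m : ℕ) (Γ A : Matrix (Fin m) (Fin m) ℝ) (ε s : ℝ) :
    Matrix (Fin m) (Fin m) ℂ :=
  (-(ε * s ^ 2) : ℂ) • (1 : Matrix (Fin m) (Fin m) ℂ)
    + (Complex.I * s) • Γ.map (fun a => (a : ℂ))
    + (ε : ℂ) • A.map (fun a => (a : ℂ))

/-! Write `D = M + i s Γ` with `M = ε (A - s²)` real symmetric. For `v ∈ ℂ^m` the number `⟪v, M v⟫`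
is real, so `|Im ⟪v, D v⟫| = |s| ⟪v, Γ v⟫ ≥ κ₁² |s| ‖v‖²`, and Cauchy–Schwarz turns this into
`‖D v‖ ≥ κ₁² |s| ‖v‖`. Such a lower bound makes `D` injective, hence invertible, and bounds the norm
of `D⁻¹` by `1 / (κ₁² |s|)`. -/

open Matrix Complex
open scoped ComplexOrder InnerProductSpace

theorem mul_norm_le_norm_of_mul_norm_sq_le_norm_inner {𝕜 E : Type*} [RCLike 𝕜]
    [NormedAddCommGroup E] [InnerProductSpace 𝕜 E] {x y : E} {c : ℝ}
    (h : c * ‖x‖ ^ 2 ≤ ‖⟪x, y⟫_𝕜‖) : c * ‖x‖ ≤ ‖y‖ := by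
  rcases (norm_nonneg x).eq_or_lt with hx | hx
  · rw [← hx, mul_zero]
    exact norm_nonneg y
  · have := h.trans (norm_inner_le_norm x y)
    rw [pow_two, ← mul_assoc, mul_comm ‖x‖] at this
    exact le_of_mul_le_mul_right this hx

namespace LinearMap.IsSymmetric

variable {E : Type*} [NormedAddCommGroup E] [InnerProductSpace ℂ E] {H G : E →ₗ[ℂ] E}

theorem im_inner_add_I_mul_smul_apply (hH : H.IsSymmetric) (t : ℝ) (v : E) :
    (⟪v, (H + (I * t) • G) v⟫_ℂ).im = t * (⟪v, G v⟫_ℂ).re := by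
  have hHv : (⟪v, H v⟫_ℂ).im = 0 := hH.im_inner_self_apply v
  simp [hHv]

theorem mul_abs_mul_norm_le_norm_add_I_mul_smul_apply (hH : H.IsSymmetric) {c : ℝ}
    (hGc : ∀ v, c * ‖v‖ ^ 2 ≤ (⟪v, G v⟫_ℂ).re) (t : ℝ) (v : E) :
    c * |t| * ‖v‖ ≤ ‖(H + (I * t) • G) v‖ := by
  refine mul_norm_le_norm_of_mul_norm_sq_le_norm_inner (𝕜 := ℂ) ?_
  calc c * |t| * ‖v‖ ^ 2 = |t| * (c * ‖v‖ ^ 2) := by ring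
    _ ≤ |t| * (⟪v, G v⟫_ℂ).re := mul_le_mul_of_nonneg_left (hGc v) (abs_nonneg t)
    _ ≤ |(⟪v, (H + (I * t) • G) v⟫_ℂ).im| := by
      rw [hH.im_inner_add_I_mul_smul_apply, abs_mul]
      exact mul_le_mul_of_nonneg_left (le_abs_self _) (abs_nonneg t)
    _ ≤ ‖⟪v, (H + (I * t) • G) v⟫_ℂ‖ := abs_im_le_norm _

end LinearMap.IsSymmetric

namespace Matrix

theorem IsSymm.isHermitian_map_ofReal {n : Type*} {A : Matrix n n ℝ} (hA : A.IsSymm) :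
    (A.map ((↑) : ℝ → ℂ)).IsHermitian :=
  (isHermitian_iff_isSymm.mpr hA).map _ fun _ => by simp

theorem spectrum_real_map_ofReal_subset {n : Type*} [Fintype n] [DecidableEq n]
    (A : Matrix n n ℝ) : spectrum ℝ (A.map ((↑) : ℝ → ℂ)) ⊆ spectrum ℝ A :=
  AlgHom.spectrum_apply_subset (Algebra.ofId ℝ ℂ).mapMatrix A

variable {n 𝕜 : Type*} [Fintype n] [DecidableEq n] [RCLike 𝕜]

theorem PosDef.pos_of_mem_spectrum {A : Matrix n n 𝕜} (hA : A.PosDef) {x : ℝ}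
    (hx : x ∈ spectrum ℝ A) : 0 < x := by
  rw [hA.isHermitian.spectrum_real_eq_range_eigenvalues] at hx
  obtain ⟨i, rfl⟩ := hx
  exact hA.eigenvalues_pos i

open scoped MatrixOrder Matrix.Norms.L2Operator in
theorem IsHermitian.mul_norm_sq_le_re_inner_toEuclideanLin {B : Matrix n n 𝕜}
    (hB : B.IsHermitian) {μ : ℝ} (hμ : ∀ x ∈ spectrum ℝ B, μ ≤ x) (v : EuclideanSpace 𝕜 n) :
    μ * ‖v‖ ^ 2 ≤ RCLike.re ⟪v, B.toEuclideanLin v⟫_𝕜 := by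
  have hle : algebraMap ℝ (Matrix n n 𝕜) μ ≤ B :=
    (algebraMap_le_iff_le_spectrum hB.isSelfAdjoint).mpr hμ
  have hscalar : toEuclideanLin (algebraMap ℝ (Matrix n n 𝕜) μ) v = (μ : 𝕜) • v := by
    ext i
    simp [algebraMap_eq_diagonal, mulVec_diagonal, RCLike.real_smul_eq_coe_mul]
  have hnonneg :=
    (isPositive_toEuclideanLin_iff.mpr (Matrix.le_iff.mp hle)).re_inner_nonneg_right v
  rw [map_sub, LinearMap.sub_apply, hscalar, inner_sub_right, inner_smul_right, map_sub,
    inner_self_eq_norm_sq_to_K, ← RCLike.ofReal_pow, ← RCLike.ofReal_mul, RCLike.ofReal_re]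
    at hnonneg
  linarith

theorem isUnit_of_mul_norm_le_norm_toEuclideanLin {M : Matrix n n 𝕜} {c : ℝ} (hc : 0 < c)
    (h : ∀ v, c * ‖v‖ ≤ ‖M.toEuclideanLin v‖) : IsUnit M := by
  refine mulVec_injective_iff_isUnit.mp fun x y hxy => ?_
  have := h (WithLp.toLp 2 (x - y))
  rw [toLpLin_toLp, toLin'_apply, mulVec_sub, hxy, sub_self, WithLp.toLp_zero, norm_zero] at this
  have : ‖WithLp.toLp 2 (x - y)‖ = 0 :=
    le_antisymm (nonpos_of_mul_nonpos_right this hc) (norm_nonneg _)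
  simpa [sub_eq_zero] using this

theorem norm_toEuclideanLin_inv_le {M : Matrix n n 𝕜} {c : ℝ} (hc : 0 < c)
    (h : ∀ v, c * ‖v‖ ≤ ‖M.toEuclideanLin v‖) :
    ‖LinearMap.toContinuousLinearMap M⁻¹.toEuclideanLin‖ ≤ c⁻¹ := by
  have hM : M * M⁻¹ = 1 :=
    mul_nonsing_inv M ((isUnit_iff_isUnit_det M).mp (isUnit_of_mul_norm_le_norm_toEuclideanLin hc h))
  refine ContinuousLinearMap.opNorm_le_bound _ (inv_nonneg.mpr hc.le) fun w => ?_
  have hw : M.toEuclideanLin (M⁻¹.toEuclideanLin w) = w := by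
    ext i
    simp [mulVec_mulVec, hM]
  rw [le_inv_mul_iff₀ hc]
  simpa [hw] using h (M⁻¹.toEuclideanLin w)

end Matrix

theorem propagator_eq_map_add_I_mul_smul_map (m : ℕ) (Γ A : Matrix (Fin m) (Fin m) ℝ) (ε s : ℝ) :
    propagator m Γ A ε s =
      (ε • (A - s ^ 2 • 1)).map ((↑) : ℝ → ℂ) + (I * s) • Γ.map ((↑) : ℝ → ℂ) := by
  ext i j
  simp only [propagator, Matrix.add_apply, Matrix.smul_apply, Matrix.sub_apply, one_apply,
    map_apply, smul_eq_mul]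
  split_ifs <;> push_cast <;> ring

theorem propagator_inverse_bound_general
    (m : ℕ)
    (Γ A : Matrix (Fin m) (Fin m) ℝ)
    (hΓsymm : Γ.IsSymm) (hΓpos : Γ.PosDef) (hAsymm : A.IsSymm)
    (κ₁ : ℝ) (hκ : IsLeast (spectrum ℝ Γ) (κ₁ ^ 2))
    (ε s : ℝ) (hs : s ≠ 0) :
    IsUnit (propagator m Γ A ε s) ∧
      l2OpNorm m (propagator m Γ A ε s)⁻¹ ≤ 1 / (κ₁ ^ 2 * |s|) := by
  have hc : 0 < κ₁ ^ 2 * |s| := mul_pos (hΓpos.pos_of_mem_spectrum hκ.1) (abs_pos.mpr hs)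
  have hΓ : ∀ v, κ₁ ^ 2 * ‖v‖ ^ 2 ≤ (⟪v, (Γ.map ((↑) : ℝ → ℂ)).toEuclideanLin v⟫_ℂ).re :=
    hΓsymm.isHermitian_map_ofReal.mul_norm_sq_le_re_inner_toEuclideanLin fun x hx =>
      hκ.2 (spectrum_real_map_ofReal_subset Γ hx)
  have hsymm : (ε • (A - s ^ 2 • 1)).IsSymm := (hAsymm.sub (isSymm_one.smul _)).smul ε
  have hbound : ∀ v, κ₁ ^ 2 * |s| * ‖v‖ ≤ ‖(propagator m Γ A ε s).toEuclideanLin v‖ := by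
    intro v
    rw [propagator_eq_map_add_I_mul_smul_map, map_add, map_smul]
    exact (isSymmetric_toEuclideanLin_iff.mpr hsymm.isHermitian_map_ofReal)
      |>.mul_abs_mul_norm_le_norm_add_I_mul_smul_apply hΓ s v
  exact ⟨isUnit_of_mul_norm_le_norm_toEuclideanLin hc hbound,
    by simpa only [l2OpNorm, one_div] using norm_toEuclideanLin_inv_le hc hbound⟩

theorem propagator_inverse_bound
    (m : ℕ) (hm : 1 ≤ m)
    (Γ A : Matrix (Fin m) (Fin m) ℝ)
    (hΓsymm : Γ.IsSymm) (hΓpos : Γ.PosDef) (hAsymm : A.IsSymm)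
    (κ₁ : ℝ) (hκ : IsLeast (spectrum ℝ Γ) (κ₁ ^ 2))
    (ε s : ℝ) (hs : s ≠ 0) :
    IsUnit (propagator m Γ A ε s) ∧
      l2OpNorm m (propagator m Γ A ε s)⁻¹ ≤ 1 / (κ₁ ^ 2 * |s|) :=
  propagator_inverse_bound_general m Γ A hΓsymm hΓpos hAsymm κ₁ hκ ε s hs

end
end

section
/- Let m ≥ 1 and let Γ and A be symmetric positive definite real m×m matrices. Let κ₁² denote the smallest eigenvalue of Γ, let K be the positive definite symmetric square root of Γ, let b₁ > 0 denote the smallest eigenvalue of K⁻¹ A K⁻¹, and set α = √(b₁ κ₁² / 2). Then for every ε > 0 and every s ∈ ℝ with |s| ≤ α, the complex matrix D(ε, s) = −ε s² I + i s Γ + ε A is invertible and ‖D(ε, s)⁻¹‖ ≤ 2/(κ₁² b₁ ε). -/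
/-!
Since `Γ` is symmetric, `i s Γ` is skew-Hermitian and the Hermitian part of `D(ε, s)` is
`ε (A - s²)`. Conjugating `K⁻¹ A K⁻¹ ≥ b₁` by `K` gives `A ≥ b₁ Γ ≥ b₁ κ₁²` in the Loewner order,
so for `s² ≤ b₁ κ₁² / 2` we get `Re ⟪x, D x⟫ ≥ ε b₁ κ₁² ‖x‖² / 2`. A matrix that is coercive in
this sense is injective, hence invertible, and the inverse has norm at most the reciprocal of the
coercivity constant.
-/

noncomputable section

open Matrix
open scoped MatrixOrder InnerProductSpace

lemma LinearMap.mul_norm_le_norm_apply_of_coercive {𝕜 E : Type*} [RCLike 𝕜]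
    [NormedAddCommGroup E] [InnerProductSpace 𝕜 E] (T : E →ₗ[𝕜] E) {c : ℝ}
    (hT : ∀ x, c * ‖x‖ ^ 2 ≤ RCLike.re ⟪x, T x⟫_𝕜) (x : E) : c * ‖x‖ ≤ ‖T x‖ := by
  rcases (norm_nonneg x).eq_or_lt with hx | hx
  · simp [← hx]
  · refine le_of_mul_le_mul_left ?_ hx
    calc ‖x‖ * (c * ‖x‖) = c * ‖x‖ ^ 2 := by ring
      _ ≤ RCLike.re ⟪x, T x⟫_𝕜 := hT x
      _ ≤ ‖x‖ * ‖T x‖ := re_inner_le_norm x (T x)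

namespace Matrix

variable {𝕜 n : Type*} [RCLike 𝕜] [Fintype n] [DecidableEq n]

lemma isUnit_and_norm_inv_le_of_coercive (D : Matrix n n 𝕜) {c : ℝ} (hc : 0 < c)
    (hD : ∀ x, c * ‖x‖ ^ 2 ≤ RCLike.re ⟪x, toEuclideanLin D x⟫_𝕜) :
    IsUnit D ∧ ‖LinearMap.toContinuousLinearMap (toEuclideanLin D⁻¹)‖ ≤ c⁻¹ := by
  have hlow := (toEuclideanLin D).mul_norm_le_norm_apply_of_coercive hD
  have hinj : Function.Injective (toEuclideanLin D) := by
    refine (injective_iff_map_eq_zero _).2 fun x hx => norm_le_zero_iff.1 ?_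
    exact le_of_mul_le_mul_left (by simpa [hx] using hlow x) hc
  have hunit : IsUnit D := by
    rw [← isUnit_map_iff (toLpLinAlgEquiv 2 : Matrix n n 𝕜 ≃ₐ[𝕜] _)]
    exact (LinearMap.isUnit_iff_ker_eq_bot _).2 (LinearMap.ker_eq_bot.2 hinj)
  refine ⟨hunit, ContinuousLinearMap.opNorm_le_bound _ (inv_nonneg.2 hc.le) fun w => ?_⟩
  have hw : toEuclideanLin D (toEuclideanLin D⁻¹ w) = w := by
    rw [← LinearMap.comp_apply, ← toLpLin_mul_same,
      mul_nonsing_inv _ ((isUnit_iff_isUnit_det D).1 hunit), toLpLin_one, LinearMap.id_apply]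
  rw [LinearMap.coe_toContinuousLinearMap', inv_mul_eq_div, le_div_iff₀' hc]
  simpa only [hw] using hlow (toEuclideanLin D⁻¹ w)

lemma smul_mul_self_le_of_mem_lowerBounds_spectrum {A K : Matrix n n 𝕜} (hA : A.IsHermitian)
    (hK : K.IsHermitian) (hKu : IsUnit K) {b : ℝ}
    (hb : b ∈ lowerBounds (spectrum ℝ (K⁻¹ * A * K⁻¹))) : b • (K * K) ≤ A := by
  have hdet := (isUnit_iff_isUnit_det K).1 hKu
  have hself : IsSelfAdjoint (K⁻¹ * A * K⁻¹) := by
    simpa [hK.inv.eq] using (isHermitian_conjTranspose_mul_mul K⁻¹ hA).isSelfAdjoint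
  have := star_left_conjugate_le_conjugate ((algebraMap_le_iff_le_spectrum hself).2 hb) K
  rw [star_eq_conjTranspose, hK.eq] at this
  convert this using 1
  · simp [Algebra.algebraMap_eq_smul_one]
  · simp [mul_assoc, nonsing_inv_mul _ hdet, mul_nonsing_inv_cancel_left _ _ hdet]

-- Entrywise complexification is a star ring hom, hence monotone for the Loewner order.
lemma map_ofReal_mono {A B : Matrix n n ℝ} (h : A ≤ B) :
    A.map ((↑) : ℝ → ℂ) ≤ B.map ((↑) : ℝ → ℂ) :=
  let f : Matrix n n ℝ →⋆ₙ+* Matrix n n ℂ :=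
    { (Complex.ofRealHom.mapMatrix : Matrix n n ℝ →+* Matrix n n ℂ) with
      map_star' := fun M => by ext; simp }
  OrderHomClass.mono f h

end Matrix

lemma mul_norm_sq_le_re_inner_propagator {m : ℕ} {Γ A : Matrix (Fin m) (Fin m) ℝ}
    (hΓ : Γ.IsHermitian) {r : ℝ} (hA : algebraMap ℝ _ r ≤ A) {ε : ℝ} (hε : 0 ≤ ε) (s : ℝ)
    (x : EuclideanSpace ℂ (Fin m)) :
    ε * (r - s ^ 2) * ‖x‖ ^ 2 ≤ RCLike.re ⟪x, toEuclideanLin (propagator m Γ A ε s) x⟫_ℂ := by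
  have hΓx : RCLike.im ⟪x, toEuclideanLin (Γ.map fun a => (a : ℂ)) x⟫_ℂ = 0 :=
    (isSymmetric_toEuclideanLin_iff.2 (hΓ.map ((↑) : ℝ → ℂ)
      fun a => (Complex.conj_ofReal a).symm)).im_inner_self_apply x
  have hAx : r * ‖x‖ ^ 2 ≤ RCLike.re ⟪x, toEuclideanLin (A.map fun a => (a : ℂ)) x⟫_ℂ := by
    have := (isPositive_toEuclideanLin_iff.2 (map_ofReal_mono hA)).re_inner_nonneg_right x
    rw [map_algebraMap r _ Complex.ofReal_zero rfl, Algebra.algebraMap_eq_smul_one,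
      RCLike.real_smul_eq_coe_smul (K := ℂ), map_sub, map_smul, toLpLin_one] at this
    simp only [LinearMap.sub_apply, LinearMap.smul_apply, LinearMap.id_apply, inner_sub_right,
      inner_smul_right, inner_self_eq_norm_sq_to_K, map_sub, sub_nonneg] at this
    norm_cast at this
  have hx : RCLike.re ⟪x, x⟫_ℂ = ‖x‖ ^ 2 := inner_self_eq_norm_sq x
  simp only [propagator, map_add, map_smul, toLpLin_one, LinearMap.add_apply,
    LinearMap.smul_apply, LinearMap.id_apply, inner_add_right, inner_smul_right]
  simp only [RCLike.re_to_complex, RCLike.im_to_complex, Complex.mul_re, Complex.mul_im,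
    Complex.neg_re, Complex.neg_im, Complex.I_re, Complex.I_im, ← Complex.ofReal_pow,
    ← Complex.ofReal_mul, Complex.ofReal_re, Complex.ofReal_im] at hΓx hx hAx ⊢
  rw [hΓx, hx]
  linarith [mul_le_mul_of_nonneg_left hAx hε]

theorem propagator_inverse_bound_small_s_general
    (m : ℕ)
    (Γ A : Matrix (Fin m) (Fin m) ℝ)
    (hΓpos : Γ.PosDef) (hAsymm : A.IsSymm)
    (κ₁ : ℝ) (hκ : IsLeast (spectrum ℝ Γ) (κ₁ ^ 2))
    (K : Matrix (Fin m) (Fin m) ℝ) (hKpos : K.PosDef)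
    (hKsq : K * K = Γ)
    (b₁ : ℝ) (hb₁pos : 0 < b₁) (hb₁ : IsLeast (spectrum ℝ (K⁻¹ * A * K⁻¹)) b₁)
    (ε : ℝ) (hε : 0 < ε) (s : ℝ) (hs : |s| ≤ Real.sqrt (b₁ * κ₁ ^ 2 / 2)) :
    IsUnit (propagator m Γ A ε s) ∧
      l2OpNorm m (propagator m Γ A ε s)⁻¹ ≤ 2 / (κ₁ ^ 2 * b₁ * ε) := by
  have hκpos : 0 < κ₁ ^ 2 := hΓpos.isStrictlyPositive.spectrum_pos hκ.1
  have hΓκ : algebraMap ℝ _ (κ₁ ^ 2) ≤ Γ :=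
    (algebraMap_le_iff_le_spectrum hΓpos.isHermitian.isSelfAdjoint).2 hκ.2
  have hAΓ : b₁ • Γ ≤ A := hKsq ▸ smul_mul_self_le_of_mem_lowerBounds_spectrum
    (isHermitian_iff_isSymm.2 hAsymm) hKpos.isHermitian hKpos.isUnit hb₁.2
  have hA : algebraMap ℝ _ (κ₁ ^ 2 * b₁) ≤ A := calc
    algebraMap ℝ _ (κ₁ ^ 2 * b₁) = b₁ • algebraMap ℝ _ (κ₁ ^ 2) := by
      rw [mul_comm, map_mul, Algebra.smul_def]
    _ ≤ b₁ • Γ := smul_le_smul_of_nonneg_left hΓκ hb₁pos.le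
    _ ≤ A := hAΓ
  have hs2 : s ^ 2 ≤ b₁ * κ₁ ^ 2 / 2 := (Real.sq_le (by positivity)).2 (abs_le.1 hs)
  have hc : 0 < ε * (κ₁ ^ 2 * b₁ - s ^ 2) := by nlinarith [mul_pos hκpos hb₁pos]
  obtain ⟨hunit, hnorm⟩ := isUnit_and_norm_inv_le_of_coercive _ hc
    (mul_norm_sq_le_re_inner_propagator hΓpos.isHermitian hA hε.le s)
  refine ⟨hunit, hnorm.trans ?_⟩
  rw [inv_eq_one_div, div_le_div_iff₀ hc (by positivity)]
  nlinarith [mul_pos hκpos hb₁pos]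

theorem propagator_inverse_bound_small_s
    (m : ℕ) (hm : 1 ≤ m)
    (Γ A : Matrix (Fin m) (Fin m) ℝ)
    (hΓsymm : Γ.IsSymm) (hΓpos : Γ.PosDef) (hAsymm : A.IsSymm) (hApos : A.PosDef)
    (κ₁ : ℝ) (hκ : IsLeast (spectrum ℝ Γ) (κ₁ ^ 2))
    (K : Matrix (Fin m) (Fin m) ℝ) (hKsymm : K.IsSymm) (hKpos : K.PosDef)
    (hKsq : K * K = Γ)
    (b₁ : ℝ) (hb₁pos : 0 < b₁) (hb₁ : IsLeast (spectrum ℝ (K⁻¹ * A * K⁻¹)) b₁)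
    (ε : ℝ) (hε : 0 < ε) (s : ℝ) (hs : |s| ≤ Real.sqrt (b₁ * κ₁ ^ 2 / 2)) :
    IsUnit (propagator m Γ A ε s) ∧
      l2OpNorm m (propagator m Γ A ε s)⁻¹ ≤ 2 / (κ₁ ^ 2 * b₁ * ε) :=
  propagator_inverse_bound_small_s_general m Γ A hΓpos hAsymm κ₁ hκ K hKpos hKsq b₁ hb₁pos hb₁ ε hε
    s hs

end
end
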